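/- For all integers n and m: u_{n+2m}(X) + u_{n-2m}(X) = (u_{2m+1}(X) - u_{2m-1}(X))·u_n(X). -/
import Mathlib


open Polynomial

noncomputable def uAux : ℕ → Polynomial ℤ
  | 0 => 0
  | 1 => 1
  | (n + 2) => (X - 2) * uAux (n + 1) - uAux n

/-- The family `u_n(X)` for `n : ℤ`, with `u_{-n} = -u_n`. -/
noncomputable def u (n : ℤ) : Polynomial ℤ :=
  if 0 ≤ n then uAux n.toNat else -uAux (-n).toNat

lemma u_ofNat (k : ℕ) : u (k : ℤ) = uAux k := by
  simp [u]

lemma u_neg (n : ℤ) : u (-n) = -u n := by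
  unfold u
  rcases lt_trichotomy n 0 with h | h | h
  · rw [if_pos (by omega), if_neg (by omega)]
    simp
  · subst h; simp [uAux]
  · rw [if_neg (by omega), if_pos (by omega)]
    simp

lemma u_rec (n : ℤ) : u (n + 2) = (X - 2) * u (n + 1) - u n := by
  rcases le_or_gt 0 n with h | h
  · obtain ⟨k, rfl⟩ := Int.eq_ofNat_of_zero_le h
    have e1 : (k : ℤ) + 2 = ((k + 2 : ℕ) : ℤ) := by push_cast; ring
    have e2 : (k : ℤ) + 1 = ((k + 1 : ℕ) : ℤ) := by push_cast; ring
    rw [e1, e2, u_ofNat, u_ofNat, u_ofNat]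
    rw [show uAux (k + 2) = (X - 2) * uAux (k + 1) - uAux k from rfl]
  · rcases eq_or_lt_of_le (show n ≤ -1 by omega) with h1 | h1
    · subst h1
      norm_num
      rw [show (-1 : ℤ) = -((1:ℕ):ℤ) by norm_num, u_neg,
        show (0:ℤ) = ((0:ℕ):ℤ) by norm_num,
        show (1:ℤ) = ((1:ℕ):ℤ) by norm_num, u_ofNat, u_ofNat]
      simp [uAux]
    · obtain ⟨k, hk⟩ : ∃ k : ℕ, n = -((k : ℤ) + 2) := ⟨(-n - 2).toNat, by omega⟩
      subst hk
      have e1 : -((k:ℤ) + 2) + 2 = -((k:ℕ):ℤ) := by ring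
      have e2 : -((k:ℤ) + 2) + 1 = -(((k+1:ℕ)):ℤ) := by push_cast; ring
      have e3 : -((k:ℤ) + 2) = -(((k+2:ℕ)):ℤ) := by push_cast; ring
      rw [e1, e2, e3, u_neg, u_neg, u_neg, u_ofNat, u_ofNat, u_ofNat]
      have : uAux (k + 2) = (X - 2) * uAux (k + 1) - uAux k := rfl
      linear_combination -this

lemma keyN : ∀ (k : ℕ) (n : ℤ), u (n + k) + u (n - k) = (u (k + 1) - u (k - 1)) * u n := by
  intro k
  induction k using Nat.twoStepInduction with
  | zero =>
    intro n
    norm_num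
    rw [show (-1:ℤ) = -((1:ℕ):ℤ) by norm_num, u_neg,
      show (1:ℤ) = ((1:ℕ):ℤ) by norm_num, u_ofNat]
    simp [uAux]
    ring
  | one =>
    intro n
    push_cast
    have r := u_rec (n - 1)
    have e : n - 1 + 2 = n + 1 := by ring
    have e2 : n - 1 + 1 = n := by ring
    rw [e, e2] at r
    have h2 : u 2 = X - 2 := by
      have h := u_ofNat 2
      norm_num at h
      rw [h, show uAux 2 = (X - 2) * uAux 1 - uAux 0 from rfl]
      simp [uAux]
    have h0 : u (0:ℤ) = 0 := by simp [u, uAux]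
    rw [h2, h0]
    linear_combination r
  | more k ih1 ih2 =>
    intro n
    push_cast
    have r1 := u_rec (n + k)
    have r2 := u_rec (n - (k:ℤ) - 2)
    have r3 := u_rec ((k:ℤ) + 1)
    have r4 := u_rec ((k:ℤ) - 1)
    have i1 := ih1 n
    have i2 := ih2 n
    push_cast at i1 i2
    have e1 : n + ((k:ℤ) + 2) = n + k + 2 := by ring
    have e2 : n - ((k:ℤ) + 2) = n - k - 2 := by ring
    have e3 : n - (k:ℤ) - 2 + 2 = n - k := by ring
    have e4 : n - (k:ℤ) - 2 + 1 = n - k - 1 := by ring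
    have e5 : (k:ℤ) + 1 + 2 = k + 2 + 1 := by ring
    have e6 : (k:ℤ) + 1 + 1 = k + 2 := by ring
    have e7 : (k:ℤ) - 1 + 2 = k + 1 := by ring
    have e8 : (k:ℤ) - 1 + 1 = k := by ring
    have e9 : n + ((k:ℤ) + 1) = n + k + 1 := by ring
    have e10 : n - ((k:ℤ) + 1) = n - k - 1 := by ring
    have e11 : (k:ℤ) + 1 - 1 = k := by ring
    have e12 : (k:ℤ) + 2 - 1 = k + 1 := by ring
    have e13 : (k:ℤ) + 2 + 1 - 1 = k + 2 := by ring
    rw [e1, e2] at *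
    rw [e3, e4] at r2
    rw [e5, e6] at r3
    rw [e7, e8] at r4
    rw [e9, e10, e11] at i2
    rw [e6] at i2
    rw [show (k:ℤ) + 2 - 1 = (k:ℤ) + 1 by ring]
    linear_combination r1 + r2 + (X - 2) * i2 - i1 - u n * r3 + u n * r4

lemma key (k n : ℤ) : u (n + k) + u (n - k) = (u (k + 1) - u (k - 1)) * u n := by
  rcases le_or_gt 0 k with h | h
  · obtain ⟨j, rfl⟩ := Int.eq_ofNat_of_zero_le h
    exact keyN j n
  · obtain ⟨j, rfl⟩ : ∃ j : ℕ, k = -(j:ℤ) := ⟨(-k).toNat, by omega⟩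
    have := keyN j n
    have h1 : u (-(j:ℤ) + 1) = -u ((j:ℤ) - 1) := by
      rw [show -(j:ℤ) + 1 = -((j:ℤ) - 1) by ring, u_neg]
    have h2 : u (-(j:ℤ) - 1) = -u ((j:ℤ) + 1) := by
      rw [show -(j:ℤ) - 1 = -((j:ℤ) + 1) by ring, u_neg]
    rw [show n + -(j:ℤ) = n - j by ring, show n - -(j:ℤ) = n + j by ring, h1, h2]
    linear_combination this

theorem u_add_sub_even (n m : ℤ) :
    u (n + 2 * m) + u (n - 2 * m) = (u (2 * m + 1) - u (2 * m - 1)) * u n :=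
  key (2 * m) n
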